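/- For any smooth function u(x,t) and smooth functions A, B, C, Q of t with multiplier Λ = e^{2R(t)} u (R an antiderivative of Q), there exist T^t = (1/2)e^{2R}u² and T^x = e^{2R}(A u³/3 + C u⁴/4 + B(u u_{xx} − u_x²/2)) such that D_t T^t + D_x T^x = e^{2R} u·(u_t + A u u_x + C u² u_x + B u_{xxx} + Q u) for every smooth u(x,t). In particular (T^t, T^x) is a conservation law of the Gardner equation u_t + A u u_x + C u² u_x + B u_{xxx} + Q u = 0, giving the conserved energy ∫ e^{2R} u² dx. -/

import Mathlib

open Real

/-- Total (spatial) derivative operator `D_x`. -/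
noncomputable def dX (f : ℝ → ℝ → ℝ) : ℝ → ℝ → ℝ := fun x t => deriv (fun y => f y t) x

/-- Total (temporal) derivative operator `D_t`. -/
noncomputable def dT (f : ℝ → ℝ → ℝ) : ℝ → ℝ → ℝ := fun x t => deriv (fun s => f x s) t

lemma hasDerivAt_dX {f : ℝ → ℝ → ℝ} (hf : ContDiff ℝ (⊤ : ℕ∞) fun p : ℝ × ℝ => f p.1 p.2)
    (x t : ℝ) : HasDerivAt (fun y => f y t) (dX f x t) x := by
  have h1 : ContDiff ℝ (⊤ : ℕ∞) (fun y : ℝ => f y t) :=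
    hf.comp (contDiff_id.prodMk contDiff_const)
  exact ((h1.differentiable (by simp)) x).hasDerivAt

lemma hasDerivAt_dT {f : ℝ → ℝ → ℝ} (hf : ContDiff ℝ (⊤ : ℕ∞) fun p : ℝ × ℝ => f p.1 p.2)
    (x t : ℝ) : HasDerivAt (fun s => f x s) (dT f x t) t := by
  have h1 : ContDiff ℝ (⊤ : ℕ∞) (fun s : ℝ => f x s) :=
    hf.comp (contDiff_const.prodMk contDiff_id)
  exact ((h1.differentiable (by simp)) t).hasDerivAt

lemma contDiff_dX {f : ℝ → ℝ → ℝ} (hf : ContDiff ℝ (⊤ : ℕ∞) fun p : ℝ × ℝ => f p.1 p.2) :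
    ContDiff ℝ (⊤ : ℕ∞) fun p : ℝ × ℝ => dX f p.1 p.2 := by
  have key : ∀ p : ℝ × ℝ,
      dX f p.1 p.2 = fderiv ℝ (fun q : ℝ × ℝ => f q.1 q.2) p (1, 0) := by
    intro p
    have hD : HasFDerivAt (fun q : ℝ × ℝ => f q.1 q.2)
        (fderiv ℝ (fun q : ℝ × ℝ => f q.1 q.2) p) p :=
      ((hf.differentiable (by simp)) p).hasFDerivAt
    have hg : HasDerivAt (fun y : ℝ => ((y, p.2) : ℝ × ℝ)) ((1 : ℝ), (0 : ℝ)) p.1 :=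
      (hasDerivAt_id p.1).prodMk (hasDerivAt_const p.1 p.2)
    have := hD.comp_hasDerivAt p.1 hg
    exact this.deriv
  have h2 : ContDiff ℝ (⊤ : ℕ∞) fun p : ℝ × ℝ =>
      fderiv ℝ (fun q : ℝ × ℝ => f q.1 q.2) p ((1 : ℝ), (0 : ℝ)) :=
    (hf.fderiv_right (by simp)).clm_apply contDiff_const
  have : (fun p : ℝ × ℝ => dX f p.1 p.2)
      = fun p : ℝ × ℝ => fderiv ℝ (fun q : ℝ × ℝ => f q.1 q.2) p ((1 : ℝ), (0 : ℝ)) :=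
    funext key
  rw [this]; exact h2

theorem stmt18 (A B C Q R : ℝ → ℝ)
    (hA : ContDiff ℝ (⊤ : ℕ∞) A) (hB : ContDiff ℝ (⊤ : ℕ∞) B) (hC : ContDiff ℝ (⊤ : ℕ∞) C)
    (hQ : ContDiff ℝ (⊤ : ℕ∞) Q)
    (hR : ∀ t, HasDerivAt R (Q t) t)
    (u : ℝ → ℝ → ℝ) (hu : ContDiff ℝ (⊤ : ℕ∞) fun p : ℝ × ℝ => u p.1 p.2) :
    ∃ Tt Tx : ℝ → ℝ → ℝ,
      (∀ x t, Tt x t = (1/2) * exp (2 * R t) * (u x t)^2)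
      ∧ (∀ x t, Tx x t = exp (2 * R t) * (A t * (u x t)^3 / 3 + C t * (u x t)^4 / 4
          + B t * (u x t * dX (dX u) x t - (dX u x t)^2 / 2)))
      ∧ ∀ x t, dT Tt x t + dX Tx x t =
          exp (2 * R t) * u x t *
            (dT u x t + A t * u x t * dX u x t + C t * (u x t)^2 * dX u x t
              + B t * dX (dX (dX u)) x t + Q t * u x t) := by
  have hu1 : ContDiff ℝ (⊤ : ℕ∞) fun p : ℝ × ℝ => dX u p.1 p.2 := contDiff_dX hu
  have hu2 : ContDiff ℝ (⊤ : ℕ∞) fun p : ℝ × ℝ => dX (dX u) p.1 p.2 := contDiff_dX hu1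
  refine ⟨fun x t => (1/2) * exp (2 * R t) * (u x t)^2,
    fun x t => exp (2 * R t) * (A t * (u x t)^3 / 3 + C t * (u x t)^4 / 4
      + B t * (u x t * dX (dX u) x t - (dX u x t)^2 / 2)),
    fun _ _ => rfl, fun _ _ => rfl, ?_⟩
  intro x t
  -- time derivative of Tt
  have hRt : HasDerivAt (fun s => exp (2 * R s)) (exp (2 * R t) * (2 * Q t)) t := by
    have h2R : HasDerivAt (fun s => 2 * R s) (2 * Q t) t := (hR t).const_mul 2
    exact (Real.hasDerivAt_exp (2 * R t)).comp t h2R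
  have hut : HasDerivAt (fun s => u x s) (dT u x t) t := hasDerivAt_dT hu x t
  have hTt : HasDerivAt (fun s => (1/2) * exp (2 * R s) * (u x s)^2)
      ((1/2) * (exp (2 * R t) * (2 * Q t)) * (u x t)^2
        + (1/2) * exp (2 * R t) * (2 * u x t ^ 1 * dT u x t)) t := by
    have := ((hRt.const_mul (1/2 : ℝ)).mul (hut.pow 2))
    exact this.congr_deriv (by simp)
  -- space derivative of Tx
  have hux : HasDerivAt (fun y => u y t) (dX u x t) x := hasDerivAt_dX hu x t
  have hu1x : HasDerivAt (fun y => dX u y t) (dX (dX u) x t) x := hasDerivAt_dX hu1 x t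
  have hu2x : HasDerivAt (fun y => dX (dX u) y t) (dX (dX (dX u)) x t) x :=
    hasDerivAt_dX hu2 x t
  have hTx : HasDerivAt (fun y => exp (2 * R t) * (A t * (u y t)^3 / 3
        + C t * (u y t)^4 / 4
        + B t * (u y t * dX (dX u) y t - (dX u y t)^2 / 2)))
      (exp (2 * R t) * ((A t * (3 * u x t ^ 2 * dX u x t)) / 3
        + (C t * (4 * u x t ^ 3 * dX u x t)) / 4
        + B t * ((dX u x t * dX (dX u) x t + u x t * dX (dX (dX u)) x t)
            - (2 * dX u x t ^ 1 * dX (dX u) x t) / 2))) x := by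
    have h1 : HasDerivAt (fun y => A t * (u y t)^3 / 3)
        ((A t * (3 * u x t ^ 2 * dX u x t)) / 3) x :=
      (((hux.pow 3).const_mul (A t)).div_const 3)
    have h2 : HasDerivAt (fun y => C t * (u y t)^4 / 4)
        ((C t * (4 * u x t ^ 3 * dX u x t)) / 4) x :=
      (((hux.pow 4).const_mul (C t)).div_const 4)
    have h3 : HasDerivAt (fun y => B t * (u y t * dX (dX u) y t - (dX u y t)^2 / 2))
        (B t * ((dX u x t * dX (dX u) x t + u x t * dX (dX (dX u)) x t)
            - (2 * dX u x t ^ 1 * dX (dX u) x t) / 2)) x :=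
      ((hux.mul hu2x).sub ((hu1x.pow 2).div_const 2)).const_mul (B t)
    have := ((h1.add h2).add h3).const_mul (exp (2 * R t))
    exact this
  have e1 : dT (fun x t => (1/2) * exp (2 * R t) * (u x t)^2) x t
      = (1/2) * (exp (2 * R t) * (2 * Q t)) * (u x t)^2
        + (1/2) * exp (2 * R t) * (2 * u x t ^ 1 * dT u x t) := hTt.deriv
  have e2 : dX (fun x t => exp (2 * R t) * (A t * (u x t)^3 / 3 + C t * (u x t)^4 / 4
        + B t * (u x t * dX (dX u) x t - (dX u x t)^2 / 2))) x t
      = exp (2 * R t) * ((A t * (3 * u x t ^ 2 * dX u x t)) / 3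
        + (C t * (4 * u x t ^ 3 * dX u x t)) / 4
        + B t * ((dX u x t * dX (dX u) x t + u x t * dX (dX (dX u)) x t)
            - (2 * dX u x t ^ 1 * dX (dX u) x t) / 2)) := hTx.deriv
  rw [e1, e2]
  ring
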